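/- Let A be the semi-continuous matrix A_{θ,j} = e^{ijθ}/√(2πy) for θ ∈ [−πy, πy] and j ∈ T = {0, 1, …, n}, with 0 < y < 1/2 and c = sin(πy/2). Then the smallest singular value of A_T satisfies σ_min(A_T) ≤ 4 cⁿ. -/

import Mathlib

open Real

/-- Gram matrix of the consecutive atoms e^{ijθ}/√(2πy), θ ∈ [−πy, πy],
j = 0, …, n. -/
noncomputable def gramG (y : ℝ) (n : ℕ) : Matrix (Fin (n + 1)) (Fin (n + 1)) ℂ :=
  fun j₁ j₂ => ((1 / (2 * π * y) : ℝ) : ℂ) *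
    ∫ θ in (-(π * y))..(π * y),
      Complex.exp (Complex.I * θ * (((j₁ : ℕ) : ℂ) - ((j₂ : ℕ) : ℂ)))

open Matrix Finset ComplexOrder

set_option maxHeartbeats 1000000

lemma rayleigh {m : ℕ} {A : Matrix (Fin (m+1)) (Fin (m+1)) ℂ} (hA : A.IsHermitian)
    (b : ℝ) (hb : ∀ i, b ≤ hA.eigenvalues i) (v : Fin (m+1) → ℂ) :
    b * (star v ⬝ᵥ v).re ≤ (star v ⬝ᵥ (A *ᵥ v)).re := by
  set U : Matrix (Fin (m+1)) (Fin (m+1)) ℂ := ((hA.eigenvectorUnitary : Matrix.unitaryGroup (Fin (m+1)) ℂ) : Matrix (Fin (m+1)) (Fin (m+1)) ℂ) with hU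
  have hUU : U * star U = 1 := Matrix.mem_unitaryGroup_iff.mp hA.eigenvectorUnitary.2
  have hM : A - (b:ℂ) • (1 : Matrix (Fin (m+1)) (Fin (m+1)) ℂ) =
      U * (Matrix.diagonal (fun i => ((hA.eigenvalues i - b : ℝ) : ℂ))) * star U := by
    have h1 : (b:ℂ) • (1 : Matrix (Fin (m+1)) (Fin (m+1)) ℂ)
        = U * ((b:ℂ) • (1 : Matrix (Fin (m+1)) (Fin (m+1)) ℂ)) * star U := by
      rw [Matrix.mul_smul, Matrix.smul_mul, Matrix.mul_one, hUU]
    conv_lhs => rw [hA.spectral_theorem, Unitary.conjStarAlgAut_apply, h1]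
    rw [← Matrix.sub_mul, ← Matrix.mul_sub]
    congr 1
    rw [Matrix.smul_one_eq_diagonal, Matrix.diagonal_sub]
    congr 1
    ext i
    simp [Complex.ofReal_sub]
  have hPSD : (A - (b:ℂ) • (1 : Matrix (Fin (m+1)) (Fin (m+1)) ℂ)).PosSemidef := by
    rw [hM]
    refine Matrix.PosSemidef.mul_mul_conjTranspose_same ?_ U
    rw [Matrix.posSemidef_diagonal_iff]
    intro i
    rw [Complex.zero_le_real]
    linarith [hb i]
  have h0 := hPSD.re_dotProduct_nonneg v
  rw [Matrix.sub_mulVec, dotProduct_sub,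
    Matrix.smul_mulVec, Matrix.one_mulVec, dotProduct_smul] at h0
  have h2 : RCLike.re (star v ⬝ᵥ A *ᵥ v - (b:ℂ) • (star v ⬝ᵥ v))
      = (star v ⬝ᵥ A *ᵥ v).re - b * (star v ⬝ᵥ v).re := by
    simp [Complex.sub_re, Complex.smul_re]
  rw [h2] at h0
  linarith

noncomputable def tv (n : ℕ) : Fin (n+1) → ℂ := fun j => (-1)^(j:ℕ) * (n.choose (j:ℕ))

lemma tv_star (n : ℕ) (j : Fin (n+1)) : star (tv n j) = tv n j := by
  simp [tv, star_pow]

lemma tv_sum (n : ℕ) (x : ℂ) :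
    ∑ j : Fin (n+1), tv n j * x ^ (j:ℕ) = (1 - x)^n := by
  have h : (1 - x)^n = (-x + 1)^n := by ring
  rw [h, add_pow]
  rw [show (∑ j : Fin (n+1), tv n j * x ^ (j:ℕ))
      = ∑ j : Fin (n+1), (fun k => ((-1)^k * (n.choose k : ℂ)) * x ^ k) (j:ℕ) from rfl,
    Fin.sum_univ_eq_sum_range (fun k => ((-1)^k * (n.choose k : ℂ)) * x ^ k)]
  exact Finset.sum_congr rfl fun k hk => by ring

lemma key_exp (θ : ℝ) (k l : ℕ) : Complex.exp (Complex.I * θ * ((k:ℂ) - (l:ℂ)))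
    = Complex.exp (Complex.I * θ) ^ k * star (Complex.exp (Complex.I * θ) ^ l) := by
  rw [star_pow, Complex.star_def, ← Complex.exp_conj]
  have hc : (starRingEnd ℂ) (Complex.I * θ) = -(Complex.I * θ) := by
    simp [Complex.conj_ofReal]
  rw [hc, ← Complex.exp_nat_mul, ← Complex.exp_nat_mul, ← Complex.exp_add]
  congr 1
  ring

lemma cont_aux (w : ℂ) : Continuous fun θ : ℝ => Complex.exp (Complex.I * θ * w) := by
  fun_prop

lemma gform (y : ℝ) (n : ℕ) :
    star (tv n) ⬝ᵥ (gramG y n *ᵥ tv n) =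
      (((1 / (2 * π * y)) * ∫ θ in (-(π * y))..(π * y),
        Complex.normSq ((1 - Complex.exp (Complex.I * θ))^n) : ℝ) : ℂ) := by
  have hint : ∀ j₁ j₂ : Fin (n+1), IntervalIntegrable
      (fun θ : ℝ => (tv n j₁ * tv n j₂) * Complex.exp (Complex.I * θ * (((j₁:ℕ):ℂ) - ((j₂:ℕ):ℂ))))
      MeasureTheory.volume (-(π * y)) (π * y) :=
    fun j₁ j₂ => (Continuous.mul continuous_const (cont_aux _)).intervalIntegrable _ _
  have step1 : star (tv n) ⬝ᵥ (gramG y n *ᵥ tv n)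
      = ∑ j₁ : Fin (n+1), ∑ j₂ : Fin (n+1), ((1 / (2 * π * y) : ℝ) : ℂ) *
          ∫ θ in (-(π * y))..(π * y),
            (tv n j₁ * tv n j₂) * Complex.exp (Complex.I * θ * (((j₁:ℕ):ℂ) - ((j₂:ℕ):ℂ))) := by
    simp only [dotProduct, mulVec, Pi.star_apply, Finset.mul_sum]
    refine Finset.sum_congr rfl fun j₁ _ => Finset.sum_congr rfl fun j₂ _ => ?_
    rw [tv_star, gramG, intervalIntegral.integral_const_mul]
    ring
  rw [step1]
  have step2 : ∀ j₁ j₂ : Fin (n+1), (∫ θ in (-(π * y))..(π * y),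
        (tv n j₁ * tv n j₂) * Complex.exp (Complex.I * θ * (((j₁:ℕ):ℂ) - ((j₂:ℕ):ℂ))))
      = ∫ θ in (-(π * y))..(π * y),
          (tv n j₁ * Complex.exp (Complex.I * θ) ^ (j₁:ℕ)) *
            star (tv n j₂ * Complex.exp (Complex.I * θ) ^ (j₂:ℕ)) := by
    intro j₁ j₂
    refine intervalIntegral.integral_congr fun θ _ => ?_
    rw [key_exp, star_mul', tv_star]
    ring
  simp only [step2]
  have hint2 : ∀ j₁ j₂ : Fin (n+1), IntervalIntegrable
      (fun θ : ℝ => (tv n j₁ * Complex.exp (Complex.I * θ) ^ (j₁:ℕ)) *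
        star (tv n j₂ * Complex.exp (Complex.I * θ) ^ (j₂:ℕ)))
      MeasureTheory.volume (-(π * y)) (π * y) := by
    intro j₁ j₂
    apply Continuous.intervalIntegrable
    fun_prop
  simp only [← Finset.mul_sum]
  have swap : (∑ j₁ : Fin (n+1), ∑ j₂ : Fin (n+1), ∫ θ in (-(π * y))..(π * y),
        (tv n j₁ * Complex.exp (Complex.I * θ) ^ (j₁:ℕ)) *
          star (tv n j₂ * Complex.exp (Complex.I * θ) ^ (j₂:ℕ)))
      = ∫ θ in (-(π * y))..(π * y), ∑ j₁ : Fin (n+1), ∑ j₂ : Fin (n+1),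
          (tv n j₁ * Complex.exp (Complex.I * θ) ^ (j₁:ℕ)) *
            star (tv n j₂ * Complex.exp (Complex.I * θ) ^ (j₂:ℕ)) := by
    have h1 : ∀ j₁ : Fin (n+1), (∑ j₂ : Fin (n+1), ∫ θ in (-(π * y))..(π * y),
          (tv n j₁ * Complex.exp (Complex.I * θ) ^ (j₁:ℕ)) *
            star (tv n j₂ * Complex.exp (Complex.I * θ) ^ (j₂:ℕ)))
        = ∫ θ in (-(π * y))..(π * y), ∑ j₂ : Fin (n+1),
            (tv n j₁ * Complex.exp (Complex.I * θ) ^ (j₁:ℕ)) *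
              star (tv n j₂ * Complex.exp (Complex.I * θ) ^ (j₂:ℕ)) := fun j₁ =>
      (intervalIntegral.integral_finset_sum fun j₂ _ => hint2 j₁ j₂).symm
    have h2 : (∑ j₁ : Fin (n+1), ∫ θ in (-(π * y))..(π * y), ∑ j₂ : Fin (n+1),
          (tv n j₁ * Complex.exp (Complex.I * θ) ^ (j₁:ℕ)) *
            star (tv n j₂ * Complex.exp (Complex.I * θ) ^ (j₂:ℕ)))
        = ∫ θ in (-(π * y))..(π * y), ∑ j₁ : Fin (n+1), ∑ j₂ : Fin (n+1),
            (tv n j₁ * Complex.exp (Complex.I * θ) ^ (j₁:ℕ)) *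
              star (tv n j₂ * Complex.exp (Complex.I * θ) ^ (j₂:ℕ)) :=
      (intervalIntegral.integral_finset_sum fun j₁ _ =>
        Continuous.intervalIntegrable (continuous_finset_sum _ fun j₂ _ => by fun_prop) _ _).symm
    rw [Finset.sum_congr rfl fun j₁ _ => h1 j₁, h2]
  rw [swap]
  have ptw : ∀ θ : ℝ, (∑ j₁ : Fin (n+1), ∑ j₂ : Fin (n+1),
        (tv n j₁ * Complex.exp (Complex.I * θ) ^ (j₁:ℕ)) *
          star (tv n j₂ * Complex.exp (Complex.I * θ) ^ (j₂:ℕ)))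
      = ((Complex.normSq ((1 - Complex.exp (Complex.I * θ))^n) : ℝ) : ℂ) := by
    intro θ
    rw [← Finset.sum_mul_sum, ← star_sum, tv_sum, Complex.star_def, Complex.mul_conj]
  simp only [ptw]
  rw [intervalIntegral.integral_ofReal, ← Complex.ofReal_mul]


lemma sum_choose_sq (n : ℕ) : ∑ k ∈ range (n+1), (n.choose k)^2 = n.centralBinom := by
  rw [Nat.centralBinom, two_mul, Nat.add_choose_eq, Finset.Nat.sum_antidiagonal_eq_sum_range_succ_mk]
  refine Finset.sum_congr rfl fun k hk => ?_
  rw [Finset.mem_range] at hk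
  show n.choose k ^ 2 = n.choose k * n.choose (n - k)
  rw [Nat.choose_symm (Nat.lt_succ_iff.mp hk), sq]

lemma four_pow_le (n : ℕ) : 4^n ≤ (2*n+1) * n.centralBinom := by
  rcases lt_or_ge n 4 with h | h
  · interval_cases n <;> decide
  · exact le_of_lt (lt_of_lt_of_le (Nat.four_pow_lt_mul_centralBinom n h)
      (Nat.mul_le_mul_right _ (by omega)))

lemma two_sub_cos (θ : ℝ) : 2 - 2 * Real.cos θ = (2 * Real.sin (θ/2))^2 := by
  have h1 : Real.cos θ = 2 * Real.cos (θ/2)^2 - 1 := by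
    conv_lhs => rw [show θ = 2*(θ/2) by ring, Real.cos_two_mul]
  have h2 := Real.sin_sq_add_cos_sq (θ/2)
  nlinarith

lemma normsq_pow (θ : ℝ) (n : ℕ) :
    Complex.normSq ((1 - Complex.exp (Complex.I * θ))^n) = (2 - 2 * Real.cos θ)^n := by
  rw [map_pow]
  congr 1
  rw [mul_comm, Complex.exp_mul_I]
  simp [Complex.normSq_apply, Complex.cos_ofReal_re, Complex.sin_ofReal_re]
  nlinarith [Real.sin_sq_add_cos_sq θ]

lemma deriv_F (n : ℕ) (θ : ℝ) :
    HasDerivAt (fun t : ℝ => (2 * Real.sin (t/2))^(2*n+1))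
      (((2*n+1 : ℕ) : ℝ) * (2 * Real.sin (θ/2))^(2*n) * Real.cos (θ/2)) θ := by
  have hs : HasDerivAt (fun t : ℝ => 2 * Real.sin (t/2)) (Real.cos (θ/2)) θ := by
    have h1 : HasDerivAt (fun t : ℝ => t/2) (1/2 : ℝ) θ := by
      simpa using (hasDerivAt_id θ).div_const 2
    have h2 := (Real.hasDerivAt_sin (θ/2)).comp θ h1
    have h3 := h2.const_mul (2:ℝ)
    refine h3.congr_deriv ?_
    ring
  have := hs.fun_pow (2*n+1)
  exact this.congr_deriv (by simp)

lemma int_bound (y : ℝ) (hy0 : 0 < y) (hy1 : y < 1/2) (n : ℕ) :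
    (∫ θ in (-(π*y))..(π*y), (2 - 2*Real.cos θ)^n)
      ≤ (2/(2*(n:ℝ)+1)) * (2*(2*Real.sin (π*y/2))^(2*n+1)) := by
  have hπ := Real.pi_pos
  have ha0 : 0 < π * y := by positivity
  have ha2 : π * y < π / 2 := by nlinarith
  -- pointwise bound
  have hcos : ∀ θ ∈ Set.Icc (-(π*y)) (π*y), (1:ℝ)/2 ≤ Real.cos (θ/2) := by
    intro θ hθ
    obtain ⟨h1, h2⟩ := hθ
    have habs : |θ/2| ≤ π/3 := by
      rw [abs_le]
      constructor <;> nlinarith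
    calc (1:ℝ)/2 = Real.cos (π/3) := by rw [Real.cos_pi_div_three]
      _ ≤ Real.cos |θ/2| := Real.cos_le_cos_of_nonneg_of_le_pi (abs_nonneg _)
          (by nlinarith) habs
      _ = Real.cos (θ/2) := Real.cos_abs _
  have hptw : ∀ θ ∈ Set.Icc (-(π*y)) (π*y), (2 - 2*Real.cos θ)^n
      ≤ (2/(2*(n:ℝ)+1)) * (((2*n+1 : ℕ) : ℝ) * (2 * Real.sin (θ/2))^(2*n) * Real.cos (θ/2)) := by
    intro θ hθ
    rw [two_sub_cos, ← pow_mul]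
    have hX : (0:ℝ) ≤ (2 * Real.sin (θ/2))^(2*n) := (even_two_mul n).pow_nonneg _
    have hc := hcos θ hθ
    have hn1 : ((2*n+1 : ℕ) : ℝ) = 2*(n:ℝ)+1 := by push_cast; ring
    rw [hn1]
    have hpos : (0:ℝ) < 2*(n:ℝ)+1 := by positivity
    rw [show (2/(2*(n:ℝ)+1)) * ((2*(n:ℝ)+1) * (2 * Real.sin (θ/2))^(2*n) * Real.cos (θ/2))
      = 2 * Real.cos (θ/2) * (2 * Real.sin (θ/2))^(2*n) from by field_simp]
    nlinarith
  have hFTC : (∫ θ in (-(π*y))..(π*y),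
      (((2*n+1 : ℕ) : ℝ) * (2 * Real.sin (θ/2))^(2*n) * Real.cos (θ/2)))
      = (2*Real.sin (π*y/2))^(2*n+1) - (2*Real.sin (-(π*y)/2))^(2*n+1) := by
    exact intervalIntegral.integral_eq_sub_of_hasDerivAt
      (fun θ _ => deriv_F n θ)
      ((Continuous.intervalIntegrable (by fun_prop) _ _))
  have hmono := intervalIntegral.integral_mono_on (μ := MeasureTheory.volume) (by linarith : -(π*y) ≤ π*y)
    (Continuous.intervalIntegrable (by fun_prop) _ _)
    (Continuous.intervalIntegrable (by fun_prop) _ _) hptw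
  rw [intervalIntegral.integral_const_mul, hFTC] at hmono
  have hodd : (2*Real.sin (-(π*y)/2))^(2*n+1) = -(2*Real.sin (π*y/2))^(2*n+1) := by
    rw [show -(π*y)/2 = -(π*y/2) by ring, Real.sin_neg]
    rw [show 2 * -Real.sin (π*y/2) = -(2*Real.sin (π*y/2)) by ring]
    exact Odd.neg_pow ⟨n, by ring⟩ _
  rw [hodd] at hmono
  calc (∫ θ in (-(π*y))..(π*y), (2 - 2*Real.cos θ)^n) ≤ _ := hmono
    _ = (2/(2*(n:ℝ)+1)) * (2*(2*Real.sin (π*y/2))^(2*n+1)) := by ring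

lemma tv_norm (n : ℕ) : star (tv n) ⬝ᵥ tv n = ((n.centralBinom : ℝ) : ℂ) := by
  have key : ∀ j : Fin (n+1), star (tv n j) * tv n j = (((n.choose (j:ℕ))^2 : ℕ) : ℂ) := by
    intro j
    rw [tv_star]
    have h1 : ((-1:ℂ)^(j:ℕ))^2 = 1 := by
      rw [← pow_mul, mul_comm, pow_mul]
      norm_num
    calc tv n j * tv n j = ((-1:ℂ)^(j:ℕ))^2 * ((n.choose (j:ℕ) : ℂ))^2 := by rw [tv]; ring
      _ = (((n.choose (j:ℕ))^2 : ℕ) : ℂ) := by rw [h1]; push_cast; ring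
  calc star (tv n) ⬝ᵥ tv n = ∑ j : Fin (n+1), star (tv n j) * tv n j := by
        simp [dotProduct]
    _ = ∑ j : Fin (n+1), (fun k => (((n.choose k)^2 : ℕ) : ℂ)) (j:ℕ) :=
        Finset.sum_congr rfl fun j _ => key j
    _ = ∑ k ∈ Finset.range (n+1), (((n.choose k)^2 : ℕ) : ℂ) :=
        Fin.sum_univ_eq_sum_range (fun k => (((n.choose k)^2 : ℕ) : ℂ)) (n+1)
    _ = ((n.centralBinom : ℝ) : ℂ) := by
        rw [← Nat.cast_sum, sum_choose_sq]
        norm_cast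

/-- Upper bound on the smallest singular value of the consecutive-atom matrix:
σ_min(A_T) = λ_min(G)^{1/2} ≤ 4cⁿ with c = sin(πy/2). -/
theorem stmt15 (y : ℝ) (hy0 : 0 < y) (hy1 : y < 1 / 2) (n : ℕ)
    (c : ℝ) (hc : c = Real.sin (π * y / 2))
    (hHerm : (gramG y n).IsHermitian) :
    Real.sqrt (⨅ i, hHerm.eigenvalues i) ≤ 4 * c ^ n := by
  have hπ := Real.pi_pos
  have hc0 : 0 < c := by
    rw [hc]
    exact Real.sin_pos_of_pos_of_lt_pi (by positivity) (by nlinarith)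
  set b := ⨅ i, hHerm.eigenvalues i with hb
  have hble : ∀ i, b ≤ hHerm.eigenvalues i := fun i =>
    ciInf_le (Set.Finite.bddBelow (Set.finite_range _)) i
  have hray := rayleigh hHerm b hble (tv n)
  set N : ℝ := (n.centralBinom : ℝ) with hNdef
  have hN1 : (1:ℝ) ≤ N := by
    rw [hNdef]
    exact_mod_cast n.centralBinom_pos
  have hNre : (star (tv n) ⬝ᵥ tv n).re = N := by rw [tv_norm]; exact Complex.ofReal_re _
  have hQre : (star (tv n) ⬝ᵥ (gramG y n *ᵥ tv n)).re
      = (1/(2*π*y)) * ∫ θ in (-(π * y))..(π * y),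
          Complex.normSq ((1 - Complex.exp (Complex.I * θ))^n) := by
    rw [gform]; exact Complex.ofReal_re _
  have hintc : (∫ θ in (-(π * y))..(π * y),
        Complex.normSq ((1 - Complex.exp (Complex.I * θ))^n))
      = ∫ θ in (-(π * y))..(π * y), (2 - 2*Real.cos θ)^n :=
    intervalIntegral.integral_congr fun θ _ => normsq_pow θ n
  set P : ℝ := (c^n)^2 with hPdef
  have hP0 : 0 ≤ P := sq_nonneg _
  have hcle : 2*c ≤ π*y := by
    have := Real.sin_le (by positivity : 0 ≤ π * y / 2)
    rw [← hc] at this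
    linarith
  have hpow : (2*c)^(2*n+1) = (2*c) * ((4:ℝ)^n * P) := by
    rw [hPdef]
    calc (2*c)^(2*n+1) = (2*c) * ((2*c)^2)^n := by rw [← pow_mul, pow_succ']
      _ = (2*c) * ((4:ℝ)^n * (c^n)^2) := by
          congr 1
          rw [show (2*c)^2 = 4 * c^2 by ring, mul_pow, ← pow_mul, ← pow_mul, mul_comm 2 n]
  have hn0 : (0:ℝ) < 2*(n:ℝ)+1 := by positivity
  have hF4 : (4:ℝ)^n ≤ (2*(n:ℝ)+1) * N := by
    have := four_pow_le n
    have h' : ((4^n : ℕ) : ℝ) ≤ (((2*n+1) * n.centralBinom : ℕ) : ℝ) := Nat.cast_le.mpr this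
    push_cast at h'
    linarith
  have hQb : (star (tv n) ⬝ᵥ (gramG y n *ᵥ tv n)).re ≤ 2 * P * N := by
    rw [hQre, hintc]
    have h1 : (∫ θ in (-(π * y))..(π * y), (2 - 2*Real.cos θ)^n)
        ≤ (2/(2*(n:ℝ)+1)) * (2*(2*c)^(2*n+1)) := by
      rw [hc]
      exact int_bound y hy0 hy1 n
    have h2 : (1/(2*π*y)) * (∫ θ in (-(π * y))..(π * y), (2 - 2*Real.cos θ)^n)
        ≤ (1/(2*π*y)) * ((2/(2*(n:ℝ)+1)) * (2*(2*c)^(2*n+1))) :=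
      mul_le_mul_of_nonneg_left h1 (by positivity)
    refine h2.trans ?_
    rw [hpow]
    have h3 : (2*c) * ((4:ℝ)^n * P) ≤ (π*y) * ((4:ℝ)^n * P) :=
      mul_le_mul_of_nonneg_right hcle (by positivity)
    have h4 : (1/(2*π*y)) * ((2/(2*(n:ℝ)+1)) * (2*((2*c) * ((4:ℝ)^n * P))))
        ≤ (1/(2*π*y)) * ((2/(2*(n:ℝ)+1)) * (2*((π*y) * ((4:ℝ)^n * P)))) := by
      apply mul_le_mul_of_nonneg_left _ (by positivity)
      apply mul_le_mul_of_nonneg_left _ (by positivity)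
      apply mul_le_mul_of_nonneg_left h3 (by norm_num)
    refine h4.trans ?_
    have h5 : (1/(2*π*y)) * ((2/(2*(n:ℝ)+1)) * (2*((π*y) * ((4:ℝ)^n * P))))
        = (2/(2*(n:ℝ)+1)) * ((4:ℝ)^n * P) := by
      field_simp
    rw [h5]
    have h6 : (2/(2*(n:ℝ)+1)) * ((4:ℝ)^n * P) ≤ (2/(2*(n:ℝ)+1)) * (((2*(n:ℝ)+1) * N) * P) := by
      apply mul_le_mul_of_nonneg_left _ (by positivity)
      exact mul_le_mul_of_nonneg_right hF4 hP0
    refine h6.trans ?_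
    rw [show (2/(2*(n:ℝ)+1)) * (((2*(n:ℝ)+1) * N) * P) = 2 * P * N * ((2*(n:ℝ)+1) / (2*(n:ℝ)+1)) by ring,
      div_self (ne_of_gt hn0), mul_one]
  rw [hNre] at hray
  have hbP : b ≤ 2 * P := by
    have hbN : b * N ≤ 2 * P * N := le_trans hray hQb
    have := mul_le_mul_of_nonneg_right hbN (le_of_lt (inv_pos.mpr (by linarith : (0:ℝ) < N)))
    rw [mul_assoc, mul_assoc, mul_inv_cancel₀ (by linarith : N ≠ 0), mul_one, mul_one] at this
    exact this
  have hfin : b ≤ (4*c^n)^2 := by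
    rw [hPdef] at hbP
    nlinarith [sq_nonneg (c^n)]
  calc Real.sqrt b ≤ Real.sqrt ((4*c^n)^2) := Real.sqrt_le_sqrt hfin
    _ = 4*c^n := Real.sqrt_sq (by positivity)
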